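/- arXiv:2410.23394 — 3 statements merged into one kernel-verified Lean document; each statement's English description precedes it below -/
import Mathlib

section
/- If D_t > 0 (i.e., 0 ≤ S < 1), then D_i < D_t: equivalently, s1i − s1t > 0 where s1t = S/2 and s1i = (S(1−p) + (2−S)p) / ((S(1−p) + (2−S)p) + (Sq + (2−S)(1−q))), for 0 < p ≤ 1 and 0 < q ≤ 1. -/
lemma inferred_share_sub_half (p q S : ℝ) (h : 1 + (1 - S) * (p - q) ≠ 0) :
    (S * (1 - p) + (2 - S) * p) /
        ((S * (1 - p) + (2 - S) * p) + (S * q + (2 - S) * (1 - q))) - S / 2 =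
      (1 - S) * ((2 - S) * p + S * q) / (2 * (1 + (1 - S) * (p - q))) := by
  rw [show (S * (1 - p) + (2 - S) * p) + (S * q + (2 - S) * (1 - q)) =
      2 * (1 + (1 - S) * (p - q)) by ring]
  field_simp
  ring

lemma one_add_mul_pos_of_neg_one_lt {t x : ℝ} (ht0 : 0 ≤ t) (ht1 : t ≤ 1) (hx : -1 < x) :
    0 < 1 + t * x := by
  rcases le_total 0 x with hx0 | hx0
  · nlinarith
  · nlinarith

theorem stmt_7_general (p q S : ℝ) (hp0 : 0 < p) (hq0 : 0 < q) (hq1 : q ≤ 1)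
    (hS0 : 0 ≤ S) (hS1 : S < 1) :
    (S * (1 - p) + (2 - S) * p) /
        ((S * (1 - p) + (2 - S) * p) + (S * q + (2 - S) * (1 - q))) - S / 2 > 0 := by
  have hden : 0 < 1 + (1 - S) * (p - q) :=
    one_add_mul_pos_of_neg_one_lt (by linarith) (by linarith) (by linarith)
  have hnum : 0 < (1 - S) * ((2 - S) * p + S * q) :=
    mul_pos (by linarith) (add_pos_of_pos_of_nonneg (mul_pos (by linarith) hp0) (by positivity))
  rw [inferred_share_sub_half p q S hden.ne', gt_iff_lt]
  exact div_pos hnum (mul_pos two_pos hden)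

theorem stmt_7 (p q S : ℝ) (hp0 : 0 < p) (hp1 : p ≤ 1) (hq0 : 0 < q) (hq1 : q ≤ 1)
    (hS0 : 0 ≤ S) (hS1 : S < 1) :
    (S * (1 - p) + (2 - S) * p) /
        ((S * (1 - p) + (2 - S) * p) + (S * q + (2 - S) * (1 - q))) - S / 2 > 0 :=
  stmt_7_general p q S hp0 hq0 hq1 hS0 hS1
end

section
/- If D_t < 0 (i.e., 1 < S ≤ 2), then D_i > D_t: with s1t = S/2 and s1i = (S(1−p) + (2−S)p) / ((S(1−p) + (2−S)p) + (Sq + (2−S)(1−q))), for 0 < p ≤ 1 and 0 < q ≤ 1, we have s1i < s1t, hence 1/2 − s1i > 1/2 − s1t. -/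
/-!
Writing `a = S(1-p) + (2-S)p` and `b = Sq + (2-S)(1-q)`, the inequality `a / (a + b) < S / 2`
amounts to `(2 - S) a < S b`, and the gap `S b - (2 - S) a` factors as
`2 (S - 1) (S q + (2 - S) p)`, which is positive exactly because `S > 1`.
-/

lemma div_add_lt_half_iff {a b S : ℝ} (hab : 0 < a + b) :
    a / (a + b) < S / 2 ↔ (2 - S) * a < S * b := by
  rw [div_lt_div_iff₀ hab two_pos]
  constructor <;> intro h <;> linarith

section

variable {p q S : ℝ}

lemma mix_nonneg (hp0 : 0 ≤ p) (hp1 : p ≤ 1) (hS0 : 0 ≤ S) (hS2 : S ≤ 2) :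
    0 ≤ S * (1 - p) + (2 - S) * p :=
  add_nonneg (mul_nonneg hS0 (sub_nonneg.mpr hp1)) (mul_nonneg (sub_nonneg.mpr hS2) hp0)

lemma mix_pos_of_one_lt (hq0 : 0 < q) (hS1 : 1 < S) (hS2 : S ≤ 2) :
    0 < S * q + (2 - S) * (1 - q) := by
  have hexpand : S * q + (2 - S) * (1 - q) = (2 - S) + 2 * (S - 1) * q := by ring
  rw [hexpand]
  have : 0 < 2 * (S - 1) * q := by have := sub_pos.mpr hS1; positivity
  linarith

lemma two_sub_mul_mix_lt_mul_mix (hp0 : 0 ≤ p) (hq0 : 0 < q) (hS1 : 1 < S) (hS2 : S ≤ 2) :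
    (2 - S) * (S * (1 - p) + (2 - S) * p) < S * (S * q + (2 - S) * (1 - q)) := by
  have hgap : S * (S * q + (2 - S) * (1 - q)) - (2 - S) * (S * (1 - p) + (2 - S) * p)
      = 2 * (S - 1) * (S * q + (2 - S) * p) := by ring
  have hpos : 0 < 2 * (S - 1) * (S * q + (2 - S) * p) := by
    have hS : 0 < S - 1 := sub_pos.mpr hS1
    have h2S : 0 ≤ 2 - S := sub_nonneg.mpr hS2
    have : 0 < S * q + (2 - S) * p := by positivity
    positivity
  linarith

end

theorem stmt_8_general (p q S : ℝ) (hp0 : 0 < p) (hp1 : p ≤ 1) (hq0 : 0 < q)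
    (hS1 : 1 < S) (hS2 : S ≤ 2) :
    (S * (1 - p) + (2 - S) * p) /
        ((S * (1 - p) + (2 - S) * p) + (S * q + (2 - S) * (1 - q))) < S / 2 ∧
      1 / 2 - (S * (1 - p) + (2 - S) * p) /
          ((S * (1 - p) + (2 - S) * p) + (S * q + (2 - S) * (1 - q))) > 1 / 2 - S / 2 := by
  have hden : 0 < (S * (1 - p) + (2 - S) * p) + (S * q + (2 - S) * (1 - q)) :=
    add_pos_of_nonneg_of_pos (mix_nonneg hp0.le hp1 (by linarith) hS2)
      (mix_pos_of_one_lt hq0 hS1 hS2)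
  have hshare := (div_add_lt_half_iff hden).mpr
    (two_sub_mul_mix_lt_mul_mix hp0.le hq0 hS1 hS2)
  exact ⟨hshare, by linarith⟩

theorem stmt_8 (p q S : ℝ) (hp0 : 0 < p) (hp1 : p ≤ 1) (hq0 : 0 < q) (hq1 : q ≤ 1)
    (hS1 : 1 < S) (hS2 : S ≤ 2) :
    (S * (1 - p) + (2 - S) * p) /
        ((S * (1 - p) + (2 - S) * p) + (S * q + (2 - S) * (1 - q))) < S / 2 ∧
      1 / 2 - (S * (1 - p) + (2 - S) * p) /
          ((S * (1 - p) + (2 - S) * p) + (S * q + (2 - S) * (1 - q))) > 1 / 2 - S / 2 :=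
  stmt_8_general p q S hp0 hp1 hq0 hS1 hS2
end

section
/- The practical correction matches the omniscient correction for group A of ad 1: let p = FDR_{*,a}, q = FDR_{a,b}, u_a, u_b, R, S > 0, and define n1ai = u_a·R·(S(1−p) + (2−S)p), n1bi = u_b·R·(Sq + (2−S)(1−q)). Define fdr*a1 = u_a·R·(2−S)·p / n1ai and fdr_ab1 = u_b·R·S·q / n1bi. Then n1ai·(1 − fdr*a1) + n1bi·fdr_ab1 = u_a·(1−p)·R·S + u_b·q·R·S, which equals the true number of group-A individuals who saw ad 1. -/
theorem stmt_12 (p q ua ub R S : ℝ)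
    (hua : 0 < ua) (hub : 0 < ub) (hR : 0 < R) (hS : 0 < S)
    (n1ai n1bi : ℝ)
    (hn1ai : n1ai = ua * R * (S * (1 - p) + (2 - S) * p))
    (hn1bi : n1bi = ub * R * (S * q + (2 - S) * (1 - q)))
    (hn1ai0 : n1ai ≠ 0) (hn1bi0 : n1bi ≠ 0) :
    n1ai * (1 - ua * R * (2 - S) * p / n1ai) + n1bi * (ub * R * S * q / n1bi) =
      ua * (1 - p) * R * S + ub * q * R * S := by
  field_simp
  subst hn1ai hn1bi
  ring
end
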